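/- arXiv:1511.08495 — 5 statements merged into one kernel-verified Lean document; each statement's English description precedes it below -/
import Mathlib

section
/- Let A_t = Û Σ̂ V̂ᵀ be a singular value decomposition of a real d×d matrix with σ̂₁ ≥ … ≥ σ̂_r > 0, and let b_t, w* ∈ ℝ^d. Then ‖A_{t,r}† b_t − w*‖₂ ≤ (1/σ̂_r)·‖b_t − A_t w*‖₂ + ‖Σ_{i=r+1}^d v̂_i (v̂_iᵀ w*)‖₂. -/
open Matrix Finset

/-- The Euclidean (ℓ2) norm on `ℝ^d`. -/
noncomputable def enorm₂ {d : ℕ} (x : Fin d → ℝ) : ℝ :=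
  Real.sqrt (∑ i, x i ^ 2)

lemma enorm₂_eq_norm {d : ℕ} (x : Fin d → ℝ) :
    enorm₂ x = ‖(WithLp.equiv 2 (Fin d → ℝ)).symm x‖ := by
  rw [EuclideanSpace.norm_eq]
  simp [enorm₂, sq_abs]

lemma enorm₂_add_le {d : ℕ} (x y : Fin d → ℝ) :
    enorm₂ (x + y) ≤ enorm₂ x + enorm₂ y := by
  simp only [enorm₂_eq_norm]
  exact norm_add_le ((WithLp.equiv 2 (Fin d → ℝ)).symm x) ((WithLp.equiv 2 (Fin d → ℝ)).symm y)

lemma enorm₂_neg {d : ℕ} (x : Fin d → ℝ) : enorm₂ (-x) = enorm₂ x := by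
  simp only [enorm₂_eq_norm]
  exact norm_neg ((WithLp.equiv 2 (Fin d → ℝ)).symm x)

lemma enorm₂_mulVec_orth {d : ℕ} (M : Matrix (Fin d) (Fin d) ℝ) (h : Mᵀ * M = 1)
    (x : Fin d → ℝ) : enorm₂ (M.mulVec x) = enorm₂ x := by
  unfold enorm₂
  congr 1
  have : ∀ y : Fin d → ℝ, (∑ i, y i ^ 2) = y ⬝ᵥ y := by
    intro y; simp [dotProduct, pow_two]
  rw [this, this, Matrix.dotProduct_mulVec]
  have h2 : (M *ᵥ x) ᵥ* M = x := by
    rw [show M *ᵥ x = x ᵥ* Mᵀ from (Matrix.vecMul_transpose M x).symm,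
      Matrix.vecMul_vecMul, h, Matrix.vecMul_one]
  rw [h2]

lemma enorm₂_diag_le {d : ℕ} (g : Fin d → ℝ) (c : ℝ) (hc : 0 ≤ c)
    (h : ∀ i, |g i| ≤ c) (x : Fin d → ℝ) :
    enorm₂ ((Matrix.diagonal g).mulVec x) ≤ c * enorm₂ x := by
  unfold enorm₂
  rw [show c * Real.sqrt (∑ i, x i ^ 2) = Real.sqrt (c ^ 2 * ∑ i, x i ^ 2) by
    rw [Real.sqrt_mul (sq_nonneg c), Real.sqrt_sq hc]]
  apply Real.sqrt_le_sqrt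
  rw [Finset.mul_sum]
  apply Finset.sum_le_sum
  intro i _
  rw [Matrix.mulVec_diagonal, mul_pow]
  have : g i ^ 2 ≤ c ^ 2 := by
    rw [← sq_abs]
    exact pow_le_pow_left₀ (abs_nonneg _) (h i) 2
  exact mul_le_mul_of_nonneg_right this (sq_nonneg _)

/-- For an SVD `A_t = Û Σ̂ V̂ᵀ` with `σ̂₁ ≥ … ≥ σ̂_r > 0` and any
`b_t, w* ∈ ℝ^d`,
`‖A_{t,r}† b_t − w*‖₂ ≤ (1/σ̂_r) ‖b_t − A_t w*‖₂ + ‖∑_{i=r+1}^d v̂_i (v̂_iᵀ w*)‖₂`. -/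
theorem truncated_solution_error_bound
    (d r : ℕ) (hd : 1 ≤ d) (hr1 : 1 ≤ r) (hrd : r ≤ d)
    (Uhat Vhat : Matrix (Fin d) (Fin d) ℝ)
    (hU : Uhatᵀ * Uhat = 1 ∧ Uhat * Uhatᵀ = 1)
    (hV : Vhatᵀ * Vhat = 1 ∧ Vhat * Vhatᵀ = 1)
    (σhat : Fin d → ℝ)
    (hσanti : ∀ i j : Fin d, i ≤ j → σhat j ≤ σhat i)
    (hσnonneg : ∀ i : Fin d, 0 ≤ σhat i)
    (hσpos : ∀ i : Fin d, (i : ℕ) < r → 0 < σhat i)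
    (At : Matrix (Fin d) (Fin d) ℝ)
    (hAt : At = Uhat * Matrix.diagonal σhat * Vhatᵀ)
    (Apinv : Matrix (Fin d) (Fin d) ℝ)
    (hApinv : Apinv = Vhat *
      Matrix.diagonal (fun i : Fin d => if (i : ℕ) < r then (σhat i)⁻¹ else 0) * Uhatᵀ)
    (bt wstar : Fin d → ℝ) :
    enorm₂ (Apinv.mulVec bt - wstar) ≤
      (1 / σhat ⟨r - 1, by omega⟩) * enorm₂ (bt - At.mulVec wstar) +
        enorm₂ (∑ i ∈ Finset.univ.filter (fun i : Fin d => r ≤ (i : ℕ)),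
          ((fun j => Vhat j i) ⬝ᵥ wstar) • (fun j => Vhat j i)) := by
  set Dinv : Fin d → ℝ := fun i : Fin d => if (i : ℕ) < r then (σhat i)⁻¹ else 0 with hDinv
  set g : Fin d → ℝ := fun i : Fin d => if r ≤ (i : ℕ) then 1 else 0 with hg
  set f : Fin d → ℝ := fun i : Fin d => if (i : ℕ) < r then 1 else 0 with hf
  set S : Fin d → ℝ := ∑ i ∈ Finset.univ.filter (fun i : Fin d => r ≤ (i : ℕ)),
      ((fun j => Vhat j i) ⬝ᵥ wstar) • (fun j => Vhat j i) with hSdef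
  set rm : Fin d := ⟨r - 1, by omega⟩ with hrm
  have hσrm : 0 < σhat rm := hσpos rm (by simp [hrm]; omega)
  -- Apinv * At = Vhat * diagonal f * Vhatᵀ
  have hPA : Apinv * At = Vhat * Matrix.diagonal f * Vhatᵀ := by
    rw [hApinv, hAt]
    have h1 : Matrix.diagonal Dinv * Matrix.diagonal σhat = Matrix.diagonal f := by
      rw [Matrix.diagonal_mul_diagonal]
      have : (fun i => Dinv i * σhat i) = f := by
        funext i
        by_cases h : (i : ℕ) < r
        · simp [hDinv, hf, h, inv_mul_cancel₀ (hσpos i h).ne']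
        · simp [hDinv, hf, h]
      rw [this]
    calc Vhat * Matrix.diagonal Dinv * Uhatᵀ * (Uhat * Matrix.diagonal σhat * Vhatᵀ)
        = Vhat * (Matrix.diagonal Dinv * ((Uhatᵀ * Uhat) * Matrix.diagonal σhat)) * Vhatᵀ := by
          simp only [Matrix.mul_assoc]
      _ = Vhat * Matrix.diagonal f * Vhatᵀ := by rw [hU.1, Matrix.one_mul, h1]
  -- S = (Vhat * diagonal g * Vhatᵀ) *ᵥ wstar
  have hS : S = (Vhat * Matrix.diagonal g * Vhatᵀ) *ᵥ wstar := by
    funext j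
    rw [hSdef, Finset.sum_apply, Finset.sum_filter]
    have key : ((Vhat * Matrix.diagonal g * Vhatᵀ) *ᵥ wstar) j
        = ∑ i, ∑ k, Vhat j i * g i * Vhat k i * wstar k := by
      simp only [Matrix.mulVec, dotProduct, Matrix.mul_apply, Matrix.transpose_apply,
        Matrix.diagonal_apply, mul_ite, mul_zero, ite_mul, zero_mul,
        Finset.sum_ite_eq, Finset.sum_ite_eq', Finset.mem_univ, if_true, Finset.sum_mul]
      rw [Finset.sum_comm]
    rw [key]
    apply Finset.sum_congr rfl
    intro i _
    by_cases h : r ≤ (i : ℕ)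
    · rw [if_pos h]
      have hgi : g i = 1 := by simp [hg, h]
      simp only [Pi.smul_apply, smul_eq_mul, dotProduct, hgi, mul_one]
      rw [Finset.sum_mul]
      exact Finset.sum_congr rfl fun k _ => by ring
    · have hgi : g i = 0 := by simp [hg, h]
      simp [h, hgi]
  -- f + g = 1, so Vhat * diag f * Vᵀ + Vhat * diag g * Vᵀ = 1
  have hone : Vhat * Matrix.diagonal f * Vhatᵀ + Vhat * Matrix.diagonal g * Vhatᵀ = 1 := by
    have : Matrix.diagonal f + Matrix.diagonal g = 1 := by
      rw [Matrix.diagonal_add]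
      have hfg : (fun i => f i + g i) = fun _ : Fin d => (1 : ℝ) := by
        funext i
        by_cases h : (i : ℕ) < r
        · simp [hf, hg, h, Nat.not_le.mpr h]
        · simp [hf, hg, h, Nat.le_of_not_lt h]
      rw [hfg, Matrix.diagonal_one]
    calc Vhat * Matrix.diagonal f * Vhatᵀ + Vhat * Matrix.diagonal g * Vhatᵀ
        = Vhat * (Matrix.diagonal f + Matrix.diagonal g) * Vhatᵀ := by
          rw [Matrix.mul_add, Matrix.add_mul]
      _ = 1 := by rw [this, Matrix.mul_one, hV.2]
  -- decomposition
  have decomp : Apinv.mulVec bt - wstar = Apinv.mulVec (bt - At.mulVec wstar) + (-S) := by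
    rw [Matrix.mulVec_sub, hS, Matrix.mulVec_mulVec]
    have hw : (Apinv * At) *ᵥ wstar + (Vhat * Matrix.diagonal g * Vhatᵀ) *ᵥ wstar = wstar := by
      rw [hPA, ← Matrix.add_mulVec, hone, Matrix.one_mulVec]
    have habel : Apinv *ᵥ bt - (Apinv * At) *ᵥ wstar + -((Vhat * Matrix.diagonal g * Vhatᵀ) *ᵥ wstar)
        = Apinv *ᵥ bt - ((Apinv * At) *ᵥ wstar + (Vhat * Matrix.diagonal g * Vhatᵀ) *ᵥ wstar) := by
      abel
    rw [habel, hw]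
  -- bound on the first term
  have hbound : enorm₂ (Apinv.mulVec (bt - At.mulVec wstar)) ≤
      (σhat rm)⁻¹ * enorm₂ (bt - At.mulVec wstar) := by
    set y := bt - At.mulVec wstar with hy
    have h1 : Apinv.mulVec y = Vhat *ᵥ ((Matrix.diagonal Dinv) *ᵥ (Uhatᵀ *ᵥ y)) := by
      rw [hApinv, Matrix.mulVec_mulVec, Matrix.mulVec_mulVec]
    rw [h1, enorm₂_mulVec_orth Vhat hV.1]
    have h2 : enorm₂ (Uhatᵀ *ᵥ y) = enorm₂ y := by
      apply enorm₂_mulVec_orth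
      rw [Matrix.transpose_transpose, hU.2]
    rw [← h2]
    apply enorm₂_diag_le
    · exact inv_nonneg.2 (hσnonneg rm)
    · intro i
      by_cases h : (i : ℕ) < r
      · have hle : σhat rm ≤ σhat i := by
          apply hσanti
          rw [Fin.le_def]
          simp [hrm]; omega
        rw [hDinv]
        simp only [if_pos h]
        rw [abs_of_nonneg (inv_nonneg.2 (hσnonneg i))]
        exact inv_anti₀ hσrm hle
      · simp [hDinv, h, inv_nonneg.2 (hσnonneg rm)]
  calc enorm₂ (Apinv.mulVec bt - wstar)
      = enorm₂ (Apinv.mulVec (bt - At.mulVec wstar) + (-S)) := by rw [decomp]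
    _ ≤ enorm₂ (Apinv.mulVec (bt - At.mulVec wstar)) + enorm₂ (-S) := enorm₂_add_le _ _
    _ ≤ (σhat rm)⁻¹ * enorm₂ (bt - At.mulVec wstar) + enorm₂ S := by
        rw [enorm₂_neg]; exact add_le_add hbound le_rfl
    _ = (1 / σhat rm) * enorm₂ (bt - At.mulVec wstar) + enorm₂ S := by rw [one_div]
end

section
/- Suppose A = U Σ Vᵀ is a singular value decomposition with rank k and (A, b) satisfies the discrete Picard condition with parameter p > 1. Let (v̂_1,…,v̂_d) be any family of unit vectors in ℝ^d, and suppose ε̃ ∈ [0,1] satisfies |v̂_iᵀ v_j| ≤ ε̃ for all indices r+1 ≤ i ≤ d and 1 ≤ j ≤ k with i ≠ j. Then Σ_{i=r+1}^d | Σ_{j=1}^k (v̂_iᵀ v_j) σ_j⁻¹ (u_jᵀ b) | ≤ (d − r)·σ_r^{p−1} + (d − r)·ε̃·k·σ₁^{p−1}. -/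
open Matrix Finset

/-- The Euclidean (ℓ2) norm on `ℝ^d`. -/
noncomputable def enorm {d : ℕ} (x : Fin d → ℝ) : ℝ :=
  Real.sqrt (∑ i, x i ^ 2)

/-- Under the discrete Picard condition with parameter `p > 1`,
for a family `(v̂_1,…,v̂_d)` of unit vectors whose overlaps with the true right
singular vectors satisfy `|v̂_iᵀ v_j| ≤ ε̃` for all `r+1 ≤ i ≤ d`, `1 ≤ j ≤ k`
with `i ≠ j`, it holds that
`∑_{i=r+1}^d |∑_{j=1}^k (v̂_iᵀ v_j) σ_j⁻¹ (u_jᵀ b)|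
   ≤ (d − r) σ_r^{p−1} + (d − r) ε̃ k σ₁^{p−1}`.
(Indices are 1-indexed in the informal statement; here `σ_r` is `σ ⟨r-1,_⟩`,
`σ₁` is `σ ⟨0,_⟩`, and the powers are real powers.) -/
theorem sum_abs_le_bias_plus_overlap
    (d r : ℕ) (hd : 1 ≤ d) (hr1 : 1 ≤ r) (hrd : r ≤ d)
    (U V : Matrix (Fin d) (Fin d) ℝ)
    (hU : Uᵀ * U = 1 ∧ U * Uᵀ = 1)
    (hV : Vᵀ * V = 1 ∧ V * Vᵀ = 1)
    (σ : Fin d → ℝ)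
    (hσanti : ∀ i j : Fin d, i ≤ j → σ j ≤ σ i)
    (hσnonneg : ∀ i : Fin d, 0 ≤ σ i)
    (A : Matrix (Fin d) (Fin d) ℝ)
    (hA : A = U * Matrix.diagonal σ * Vᵀ)
    (k : ℕ) (hkd : k ≤ d)
    (hrank : ∀ i : Fin d, (0 < σ i ↔ (i : ℕ) < k))
    (b : Fin d → ℝ) (p : ℝ) (hp : 1 < p)
    -- the discrete Picard condition: |u_iᵀ b| ≤ σ_i^p for i = 1,…,k and
    -- |u_iᵀ b| ≤ σ_k^p for i = k+1,…,d
    (hPicard₁ : ∀ i : Fin d, (i : ℕ) < k → |(fun l => U l i) ⬝ᵥ b| ≤ σ i ^ p)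
    (hPicard₂ : ∀ i j : Fin d, k ≤ (i : ℕ) → (j : ℕ) + 1 = k →
      |(fun l => U l i) ⬝ᵥ b| ≤ σ j ^ p)
    (vhat : Fin d → (Fin d → ℝ))
    (hunit : ∀ i : Fin d, _root_.enorm (vhat i) = 1)
    (εt : ℝ) (hεt0 : 0 ≤ εt) (hεt1 : εt ≤ 1)
    (hoverlap : ∀ i j : Fin d, r ≤ (i : ℕ) → (j : ℕ) < k → i ≠ j →
      |vhat i ⬝ᵥ (fun l => V l j)| ≤ εt) :
    ∑ i ∈ Finset.univ.filter (fun i : Fin d => r ≤ (i : ℕ)),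
        |∑ j ∈ Finset.univ.filter (fun j : Fin d => (j : ℕ) < k),
          (vhat i ⬝ᵥ (fun l => V l j)) * (σ j)⁻¹ * ((fun l => U l j) ⬝ᵥ b)| ≤
      ((d : ℝ) - (r : ℝ)) * σ ⟨r - 1, by omega⟩ ^ (p - 1) +
        ((d : ℝ) - (r : ℝ)) * εt * (k : ℝ) * σ ⟨0, by omega⟩ ^ (p - 1) := by

  classical
  -- notation
  set σr : ℝ := σ ⟨r - 1, by omega⟩ with hσr
  set σ0 : ℝ := σ ⟨0, by omega⟩ with hσ0
  have hp1 : (0:ℝ) ≤ p - 1 := by linarith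
  have hσr_nonneg : 0 ≤ σr := hσnonneg _
  have hσ0_nonneg : 0 ≤ σ0 := hσnonneg _
  have hσr_pow : (0:ℝ) ≤ σr ^ (p - 1) := Real.rpow_nonneg hσr_nonneg _
  have hσ0_pow : (0:ℝ) ≤ σ0 ^ (p - 1) := Real.rpow_nonneg hσ0_nonneg _
  -- columns of V are unit vectors
  have hVcol : ∀ j : Fin d, ∑ l, V l j ^ 2 = 1 := by
    intro j
    have := congrFun (congrFun hV.1 j) j
    simp only [Matrix.mul_apply, Matrix.transpose_apply, Matrix.one_apply_eq] at this
    simpa [pow_two] using this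
  have hvhat_sq : ∀ i : Fin d, ∑ l, vhat i l ^ 2 = 1 := by
    intro i
    have h := hunit i
    rw [_root_.enorm, Real.sqrt_eq_one] at h
    exact h
  -- Cauchy–Schwarz bound: |vhat i ⬝ᵥ V_j| ≤ 1
  have hCS : ∀ i j : Fin d, |vhat i ⬝ᵥ (fun l => V l j)| ≤ 1 := by
    intro i j
    rw [← sq_le_one_iff_abs_le_one]
    have := Finset.sum_mul_sq_le_sq_mul_sq Finset.univ (vhat i) (fun l => V l j)
    simpa [dotProduct, hvhat_sq i, hVcol j] using this
  -- per-term bound: for j < k, σ_j⁻¹ * |u_j ⬝ b| ≤ σ_j ^ (p-1)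
  have hterm : ∀ j : Fin d, (j : ℕ) < k →
      (σ j)⁻¹ * |(fun l => U l j) ⬝ᵥ b| ≤ σ j ^ (p - 1) := by
    intro j hj
    have hσj : 0 < σ j := (hrank j).2 hj
    have h1 : (σ j)⁻¹ * |(fun l => U l j) ⬝ᵥ b| ≤ (σ j)⁻¹ * σ j ^ p :=
      mul_le_mul_of_nonneg_left (hPicard₁ j hj) (by positivity)
    have h2 : (σ j)⁻¹ * σ j ^ p = σ j ^ (p - 1) := by
      rw [← Real.rpow_neg_one (σ j), ← Real.rpow_add hσj]
      ring_nf
    linarith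
  set c : ℝ := σr ^ (p - 1) + εt * (k : ℝ) * σ0 ^ (p - 1) with hc
  have hc0 : 0 ≤ c := by positivity
  set s := Finset.univ.filter (fun j : Fin d => (j : ℕ) < k) with hs
  have hscard : s.card ≤ k := by
    have : s.card ≤ (Finset.range k).card :=
      Finset.card_le_card_of_injOn (fun j => (j : ℕ))
        (fun j hj => by simp only [hs, Finset.mem_coe, Finset.mem_filter] at hj; simpa using hj.2)
        (fun a _ b _ hab => Fin.ext hab)
    simpa using this
  -- per-i bound
  have hper : ∀ i : Fin d, r ≤ (i : ℕ) →
      |∑ j ∈ s, (vhat i ⬝ᵥ (fun l => V l j)) * (σ j)⁻¹ * ((fun l => U l j) ⬝ᵥ b)| ≤ c := by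
    intro i hi
    calc |∑ j ∈ s, (vhat i ⬝ᵥ (fun l => V l j)) * (σ j)⁻¹ * ((fun l => U l j) ⬝ᵥ b)|
        ≤ ∑ j ∈ s, |(vhat i ⬝ᵥ (fun l => V l j)) * (σ j)⁻¹ * ((fun l => U l j) ⬝ᵥ b)| :=
          Finset.abs_sum_le_sum_abs _ _
      _ = ∑ j ∈ s, |vhat i ⬝ᵥ (fun l => V l j)| * ((σ j)⁻¹ * |(fun l => U l j) ⬝ᵥ b|) := by
          refine Finset.sum_congr rfl fun j hj => ?_
          have hσj : 0 < σ j := (hrank j).2 (by simpa [hs] using hj)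
          rw [abs_mul, abs_mul, abs_of_nonneg (inv_nonneg.2 hσj.le), mul_assoc]
      _ ≤ c := by
          rw [← Finset.sum_filter_add_sum_filter_not s (fun j => j = i)]
          have hA1 : ∑ j ∈ s.filter (fun j => j = i),
              |vhat i ⬝ᵥ (fun l => V l j)| * ((σ j)⁻¹ * |(fun l => U l j) ⬝ᵥ b|)
              ≤ σr ^ (p - 1) := by
            by_cases hik : (i : ℕ) < k
            · have : s.filter (fun j => j = i) = {i} := by
                ext j
                simp only [hs, Finset.mem_filter, Finset.mem_univ, true_and, Finset.mem_singleton]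
                constructor
                · exact fun h => h.2
                · rintro rfl; exact ⟨hik, rfl⟩
              rw [this, Finset.sum_singleton]
              have h1 : |vhat i ⬝ᵥ (fun l => V l i)| ≤ 1 := hCS i i
              have h2 : (σ i)⁻¹ * |(fun l => U l i) ⬝ᵥ b| ≤ σ i ^ (p - 1) := hterm i hik
              have h3 : σ i ≤ σr := hσanti ⟨r - 1, by omega⟩ i (by simp [Fin.le_def]; omega)
              have h4 : σ i ^ (p - 1) ≤ σr ^ (p - 1) :=
                Real.rpow_le_rpow (hσnonneg i) h3 hp1
              have h5 : 0 ≤ (σ i)⁻¹ * |(fun l => U l i) ⬝ᵥ b| :=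
                mul_nonneg (inv_nonneg.2 (hσnonneg i)) (abs_nonneg _)
              calc |vhat i ⬝ᵥ (fun l => V l i)| * ((σ i)⁻¹ * |(fun l => U l i) ⬝ᵥ b|)
                  ≤ 1 * ((σ i)⁻¹ * |(fun l => U l i) ⬝ᵥ b|) :=
                    mul_le_mul_of_nonneg_right h1 h5
                _ = (σ i)⁻¹ * |(fun l => U l i) ⬝ᵥ b| := one_mul _
                _ ≤ σ i ^ (p - 1) := h2
                _ ≤ σr ^ (p - 1) := h4
            · have : s.filter (fun j => j = i) = ∅ := by
                ext j
                simp only [hs, Finset.mem_filter, Finset.mem_univ, true_and,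
                  Finset.notMem_empty, iff_false, not_and]
                rintro hj rfl; exact hik hj
              rw [this, Finset.sum_empty]; exact hσr_pow
          have hA2 : ∑ j ∈ s.filter (fun j => ¬ j = i),
              |vhat i ⬝ᵥ (fun l => V l j)| * ((σ j)⁻¹ * |(fun l => U l j) ⬝ᵥ b|)
              ≤ εt * (k : ℝ) * σ0 ^ (p - 1) := by
            have hbd : ∀ j ∈ s.filter (fun j => ¬ j = i),
                |vhat i ⬝ᵥ (fun l => V l j)| * ((σ j)⁻¹ * |(fun l => U l j) ⬝ᵥ b|)
                ≤ εt * σ0 ^ (p - 1) := by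
              intro j hj
              simp only [hs, Finset.mem_filter, Finset.mem_univ, true_and] at hj
              have hjk : (j : ℕ) < k := hj.1
              have hne : i ≠ j := fun h => hj.2 h.symm
              have h1 : |vhat i ⬝ᵥ (fun l => V l j)| ≤ εt := hoverlap i j hi hjk hne
              have h2 : (σ j)⁻¹ * |(fun l => U l j) ⬝ᵥ b| ≤ σ j ^ (p - 1) := hterm j hjk
              have h3 : σ j ≤ σ0 := hσanti ⟨0, by omega⟩ j (by simp [Fin.le_def])
              have h4 : σ j ^ (p - 1) ≤ σ0 ^ (p - 1) :=
                Real.rpow_le_rpow (hσnonneg j) h3 hp1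
              have h5 : 0 ≤ (σ j)⁻¹ * |(fun l => U l j) ⬝ᵥ b| :=
                mul_nonneg (inv_nonneg.2 (hσnonneg j)) (abs_nonneg _)
              calc |vhat i ⬝ᵥ (fun l => V l j)| * ((σ j)⁻¹ * |(fun l => U l j) ⬝ᵥ b|)
                  ≤ εt * ((σ j)⁻¹ * |(fun l => U l j) ⬝ᵥ b|) :=
                    mul_le_mul_of_nonneg_right h1 h5
                _ ≤ εt * σ j ^ (p - 1) := mul_le_mul_of_nonneg_left h2 hεt0
                _ ≤ εt * σ0 ^ (p - 1) := mul_le_mul_of_nonneg_left h4 hεt0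
            calc ∑ j ∈ s.filter (fun j => ¬ j = i),
                |vhat i ⬝ᵥ (fun l => V l j)| * ((σ j)⁻¹ * |(fun l => U l j) ⬝ᵥ b|)
                ≤ ∑ _j ∈ s.filter (fun j => ¬ j = i), εt * σ0 ^ (p - 1) :=
                  Finset.sum_le_sum hbd
              _ = ((s.filter (fun j => ¬ j = i)).card : ℝ) * (εt * σ0 ^ (p - 1)) := by
                  rw [Finset.sum_const, nsmul_eq_mul]
              _ ≤ (k : ℝ) * (εt * σ0 ^ (p - 1)) := by
                  apply mul_le_mul_of_nonneg_right _ (by positivity)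
                  exact_mod_cast le_trans (Finset.card_filter_le _ _) hscard
              _ = εt * (k : ℝ) * σ0 ^ (p - 1) := by ring
          linarith
  -- sum over i
  set t := Finset.univ.filter (fun i : Fin d => r ≤ (i : ℕ)) with ht
  have htcard : t.card ≤ d - r := by
    have : t.card ≤ (Finset.Ico r d).card :=
      Finset.card_le_card_of_injOn (fun i => (i : ℕ))
        (fun i hi => by
          simp only [ht, Finset.mem_coe, Finset.mem_filter] at hi
          simp [Finset.mem_Ico, hi.2, i.isLt])
        (fun a _ b _ hab => Fin.ext hab)
    simpa [Nat.card_Ico] using this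
  calc ∑ i ∈ t, |∑ j ∈ s, (vhat i ⬝ᵥ (fun l => V l j)) * (σ j)⁻¹ * ((fun l => U l j) ⬝ᵥ b)|
      ≤ ∑ i ∈ t, c := Finset.sum_le_sum (fun i hi => hper i (by
        simp only [ht, Finset.mem_filter] at hi; exact hi.2))
    _ = (t.card : ℝ) * c := by rw [Finset.sum_const, nsmul_eq_mul]
    _ ≤ ((d - r : ℕ) : ℝ) * c := mul_le_mul_of_nonneg_right (by exact_mod_cast htcard) hc0
    _ = ((d : ℝ) - (r : ℝ)) * c := by
        rw [Nat.cast_sub hrd]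
    _ = ((d : ℝ) - (r : ℝ)) * σr ^ (p - 1) +
        ((d : ℝ) - (r : ℝ)) * εt * (k : ℝ) * σ0 ^ (p - 1) := by
        rw [hc]; ring
end

section
/- (Correctness of the rank-one incremental SVD update.) Let U, V be real d×r matrices, Σ a real r×r matrix, and z, δ ∈ ℝ^d. Set m = Uᵀz, p = z − U m, n = Vᵀδ, q = δ − V n, and assume p ≠ 0 and q ≠ 0. Let K be the (r+1)×(r+1) matrix [[Σ, 0],[0, 0]] + [m; ‖p‖₂]·[n; ‖q‖₂]ᵀ. Then U Σ Vᵀ + z δᵀ = [U, p/‖p‖₂] · K · [V, q/‖q‖₂]ᵀ, where [U, x] denotes the d×(r+1) matrix obtained by appending the column x to U. -/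
open Matrix Finset

/-- The Euclidean (ℓ2) norm on `ℝ^d`. -/
noncomputable def euclidNorm {d : ℕ} (x : Fin d → ℝ) : ℝ :=
  Real.sqrt (∑ i, x i ^ 2)

lemma euclidNorm_ne_zero {d : ℕ} {x : Fin d → ℝ} (h : x ≠ 0) : euclidNorm x ≠ 0 := by
  have hx : ∃ i, x i ≠ 0 := by
    by_contra hc
    push_neg at hc
    exact h (funext hc)
  obtain ⟨i, hi⟩ := hx
  have hpos : 0 < ∑ j, x j ^ 2 := by
    apply Finset.sum_pos' (fun j _ => sq_nonneg _)
    exact ⟨i, Finset.mem_univ i, by positivity⟩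
  simp only [euclidNorm]
  positivity

lemma middle_zero (d r : ℕ) (U V : Matrix (Fin d) (Fin r) ℝ)
    (S : Matrix (Fin r) (Fin r) ℝ) (pp qq : Fin d → ℝ) :
    Matrix.of (fun i : Fin d => Fin.snoc (U i) (pp i)) *
      Matrix.of (Fin.snoc (fun i : Fin r => Fin.snoc (S i) (0 : ℝ)) (0 : Fin (r + 1) → ℝ)) *
      (Matrix.of (fun i : Fin d => Fin.snoc (V i) (qq i)))ᵀ = U * S * Vᵀ := by
  ext i j
  simp [Matrix.mul_apply, Fin.sum_univ_castSucc, Finset.sum_mul]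

lemma outer_part (d r : ℕ) (M N : Matrix (Fin d) (Fin (r+1)) ℝ) (a b : Fin (r+1) → ℝ) :
    M * Matrix.vecMulVec a b * Nᵀ = Matrix.vecMulVec (M.mulVec a) (N.mulVec b) := by
  ext i j
  simp only [Matrix.mul_apply, Matrix.vecMulVec_apply, Matrix.transpose_apply,
    Matrix.mulVec, dotProduct, Finset.sum_mul, Finset.mul_sum]
  refine Finset.sum_congr rfl fun k _ => Finset.sum_congr rfl fun l _ => by ring

/-- Correctness of the rank-one incremental SVD update:
For `U, V : ℝ^{d×r}`, `Σ : ℝ^{r×r}`, `z, δ ∈ ℝ^d`, setting `m = Uᵀz`,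
`p = z − Um`, `n = Vᵀδ`, `q = δ − Vn` with `p ≠ 0` and `q ≠ 0`, and
`K = [[Σ,0],[0,0]] + [m; ‖p‖]·[n; ‖q‖]ᵀ`, we have
`U Σ Vᵀ + z δᵀ = [U, p/‖p‖] K [V, q/‖q‖]ᵀ`. -/
theorem rank_one_svd_update_correct
    (d r : ℕ)
    (U V : Matrix (Fin d) (Fin r) ℝ)
    (S : Matrix (Fin r) (Fin r) ℝ)
    (z δ : Fin d → ℝ)
    (m : Fin r → ℝ) (hm : m = Uᵀ.mulVec z)
    (p : Fin d → ℝ) (hp : p = z - U.mulVec m)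
    (n : Fin r → ℝ) (hn : n = Vᵀ.mulVec δ)
    (q : Fin d → ℝ) (hq : q = δ - V.mulVec n)
    (hp0 : p ≠ 0) (hq0 : q ≠ 0)
    (K : Matrix (Fin (r + 1)) (Fin (r + 1)) ℝ)
    (hK : K = Matrix.of (Fin.snoc (fun i : Fin r => Fin.snoc (S i) (0 : ℝ))
        (0 : Fin (r + 1) → ℝ)) +
      Matrix.vecMulVec (Fin.snoc m (euclidNorm p)) (Fin.snoc n (euclidNorm q))) :
    U * S * Vᵀ + Matrix.vecMulVec z δ =
      Matrix.of (fun i : Fin d => Fin.snoc (U i) (p i / euclidNorm p)) * K *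
        (Matrix.of (fun i : Fin d => Fin.snoc (V i) (q i / euclidNorm q)))ᵀ := by
  have hcp : euclidNorm p ≠ 0 := euclidNorm_ne_zero hp0
  have hcq : euclidNorm q ≠ 0 := euclidNorm_ne_zero hq0
  have hU' : (Matrix.of (fun i : Fin d => Fin.snoc (U i) (p i / euclidNorm p))).mulVec
      (Fin.snoc m (euclidNorm p)) = z := by
    ext i
    have hpi : p i = z i - (U.mulVec m) i := by rw [hp]; rfl
    simp [Matrix.mulVec, dotProduct, Fin.sum_univ_castSucc,
      div_mul_cancel₀ _ hcp, hpi, Matrix.mulVec, dotProduct]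
  have hV' : (Matrix.of (fun i : Fin d => Fin.snoc (V i) (q i / euclidNorm q))).mulVec
      (Fin.snoc n (euclidNorm q)) = δ := by
    ext i
    have hqi : q i = δ i - (V.mulVec n) i := by rw [hq]; rfl
    simp [Matrix.mulVec, dotProduct, Fin.sum_univ_castSucc,
      div_mul_cancel₀ _ hcq, hqi, Matrix.mulVec, dotProduct]
  rw [hK, Matrix.mul_add, Matrix.add_mul, middle_zero, outer_part, hU', hV']
end

section
/- (Correctness of the mini-batch SVD update.) Let U, V be real d×r matrices, Σ a real r×r matrix, and Z, D real d×k matrices. Suppose Q_Z, R_Z satisfy Q_Z R_Z = (I − U Uᵀ) Z and Q_D, R_D satisfy Q_D R_D = (I − V Vᵀ) D, where Q_Z, Q_D are d×k and R_Z, R_D are k×k. Let K be the (r+k)×(r+k) matrix [[Σ, 0],[0, 0]] + [UᵀZ; R_Z]·[VᵀD; R_D]ᵀ. Then U Σ Vᵀ + Z Dᵀ = [U, Q_Z] · K · [V, Q_D]ᵀ, where [U, Q_Z] denotes the d×(r+k) matrix obtained by horizontal concatenation. -/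
open Matrix Finset

private lemma append_eq_elim {k r : ℕ} {α : Type*} (a : Fin r → α) (b : Fin k → α)
    (j : Fin (r + k)) :
    Fin.append a b j = Sum.elim a b (finSumFinEquiv.symm j) := by
  obtain ⟨x, rfl⟩ := finSumFinEquiv.surjective j
  rw [Equiv.symm_apply_apply]
  cases x with
  | inl i => simp [finSumFinEquiv_apply_left, Fin.append_left]
  | inr i => simp [finSumFinEquiv_apply_right, Fin.append_right]

/-- Correctness of the mini-batch SVD update:
For `U, V : ℝ^{d×r}`, `Σ : ℝ^{r×r}`, `Z, D : ℝ^{d×k}`, with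
`Q_Z R_Z = (I − UUᵀ)Z` and `Q_D R_D = (I − VVᵀ)D`, setting
`K = [[Σ,0],[0,0]] + [UᵀZ; R_Z]·[VᵀD; R_D]ᵀ`, we have
`U Σ Vᵀ + Z Dᵀ = [U, Q_Z] K [V, Q_D]ᵀ`. -/
theorem minibatch_svd_update_correct
    (d r k : ℕ)
    (U V : Matrix (Fin d) (Fin r) ℝ)
    (S : Matrix (Fin r) (Fin r) ℝ)
    (Z D : Matrix (Fin d) (Fin k) ℝ)
    (QZ QD : Matrix (Fin d) (Fin k) ℝ)
    (RZ RD : Matrix (Fin k) (Fin k) ℝ)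
    (hQZ : QZ * RZ = (1 - U * Uᵀ) * Z)
    (hQD : QD * RD = (1 - V * Vᵀ) * D)
    (K : Matrix (Fin (r + k)) (Fin (r + k)) ℝ)
    (hK : K = Matrix.of (Fin.append (fun i : Fin r => Fin.append (S i) (0 : Fin k → ℝ))
        (fun _ : Fin k => (0 : Fin (r + k) → ℝ))) +
      Matrix.of (Fin.append (fun i : Fin r => (Uᵀ * Z) i) (fun i : Fin k => RZ i)) *
        (Matrix.of (Fin.append (fun i : Fin r => (Vᵀ * D) i) (fun i : Fin k => RD i)))ᵀ) :
    U * S * Vᵀ + Z * Dᵀ =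
      Matrix.of (fun i : Fin d => Fin.append (U i) (QZ i)) * K *
        (Matrix.of (fun i : Fin d => Fin.append (V i) (QD i)))ᵀ := by
  set e := finSumFinEquiv (m := r) (n := k)
  have hUQ : Matrix.of (fun i : Fin d => Fin.append (U i) (QZ i)) =
      (fromCols U QZ).submatrix id e.symm := by
    ext i j
    simp [append_eq_elim, fromCols, e]
  have hVQ : Matrix.of (fun i : Fin d => Fin.append (V i) (QD i)) =
      (fromCols V QD).submatrix id e.symm := by
    ext i j
    simp [append_eq_elim, fromCols, e]
  have hS0 : Matrix.of (Fin.append (fun i : Fin r => Fin.append (S i) (0 : Fin k → ℝ))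
        (fun _ : Fin k => (0 : Fin (r + k) → ℝ))) =
      (fromBlocks S 0 0 (0 : Matrix (Fin k) (Fin k) ℝ)).submatrix e.symm e.symm := by
    ext i j
    rw [Matrix.of_apply, append_eq_elim]
    obtain ⟨x, rfl⟩ := (e.symm).symm.surjective i
    cases x with
    | inl a =>
      rw [Equiv.symm_symm]
      simp only [Matrix.submatrix_apply, e, Equiv.symm_apply_apply, Sum.elim_inl]
      rw [append_eq_elim]
      obtain ⟨y, rfl⟩ := (e.symm).symm.surjective j
      rw [Equiv.symm_symm]
      simp only [e, Equiv.symm_apply_apply]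
      cases y <;> simp [fromBlocks]
    | inr a =>
      rw [Equiv.symm_symm]
      simp only [Matrix.submatrix_apply, e, Equiv.symm_apply_apply, Sum.elim_inr]
      obtain ⟨y, rfl⟩ := (e.symm).symm.surjective j
      rw [Equiv.symm_symm]
      simp only [e, Equiv.symm_apply_apply]
      cases y <;> simp [fromBlocks]
  have hRZ : Matrix.of (Fin.append (fun i : Fin r => (Uᵀ * Z) i) (fun i : Fin k => RZ i)) =
      (fromRows (Uᵀ * Z) RZ).submatrix e.symm id := by
    ext i j
    rw [Matrix.of_apply]
    obtain ⟨x, rfl⟩ := (e.symm).symm.surjective i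
    rw [Equiv.symm_symm]
    have := append_eq_elim (fun i : Fin r => (Uᵀ * Z) i) (fun i : Fin k => RZ i) (e x)
    rw [congrFun this j]
    simp only [Matrix.submatrix_apply, e, Equiv.symm_apply_apply, id]
    cases x <;> rfl
  have hRD : Matrix.of (Fin.append (fun i : Fin r => (Vᵀ * D) i) (fun i : Fin k => RD i)) =
      (fromRows (Vᵀ * D) RD).submatrix e.symm id := by
    ext i j
    rw [Matrix.of_apply]
    obtain ⟨x, rfl⟩ := (e.symm).symm.surjective i
    rw [Equiv.symm_symm]
    have := append_eq_elim (fun i : Fin r => (Vᵀ * D) i) (fun i : Fin k => RD i) (e x)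
    rw [congrFun this j]
    simp only [Matrix.submatrix_apply, e, Equiv.symm_apply_apply, id]
    cases x <;> rfl
  have hKeq : K = (fromBlocks S 0 0 (0 : Matrix (Fin k) (Fin k) ℝ) +
      fromRows (Uᵀ * Z) RZ * (fromRows (Vᵀ * D) RD)ᵀ).submatrix e.symm e.symm := by
    rw [hK, hS0, hRZ, hRD, Matrix.submatrix_add]
    congr 1
  rw [hKeq, hUQ, hVQ, Matrix.transpose_submatrix, Matrix.submatrix_mul_equiv,
    Matrix.submatrix_mul_equiv]
  have : fromCols U QZ *
      (fromBlocks S 0 0 (0 : Matrix (Fin k) (Fin k) ℝ) +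
        fromRows (Uᵀ * Z) RZ * (fromRows (Vᵀ * D) RD)ᵀ) *
      (fromCols V QD)ᵀ = U * S * Vᵀ + Z * Dᵀ := by
    rw [Matrix.transpose_fromCols, Matrix.transpose_fromRows, Matrix.mul_add, Matrix.add_mul]
    have h1 : fromCols U QZ * fromBlocks S 0 0 (0 : Matrix (Fin k) (Fin k) ℝ) *
        fromRows Vᵀ QDᵀ = U * S * Vᵀ := by
      rw [fromCols_mul_fromBlocks, fromCols_mul_fromRows]
      simp [Matrix.mul_assoc]
    have hZ : fromCols U QZ * fromRows (Uᵀ * Z) RZ = Z := by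
      rw [fromCols_mul_fromRows, hQZ, Matrix.sub_mul, Matrix.one_mul, ← Matrix.mul_assoc]
      abel
    have hD : fromCols (Vᵀ * D)ᵀ RDᵀ * fromRows Vᵀ QDᵀ = Dᵀ := by
      rw [fromCols_mul_fromRows, ← Matrix.transpose_mul, ← Matrix.transpose_mul,
        ← Matrix.transpose_add, hQD, Matrix.sub_mul, Matrix.one_mul, ← Matrix.mul_assoc]
      have h3 : V * Vᵀ * D + (D - V * Vᵀ * D) = D := by abel
      rw [h3]
    rw [h1, ← Matrix.mul_assoc (fromCols U QZ), hZ, Matrix.mul_assoc Z, hD]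
  rw [this]
  rfl
end

section
/- (Eckart–Young, Frobenius norm.) Let A be a real d×d matrix with singular value decomposition A = U Σ Vᵀ, where U, V are orthogonal, Σ = diag(σ₁,…,σ_d) and σ₁ ≥ … ≥ σ_d ≥ 0, and let A_r = Σ_{i=1}^r σ_i u_i v_iᵀ be the rank-r truncation. Then for every real d×d matrix B of rank at most r, ‖A − A_r‖_F ≤ ‖A − B‖_F, where ‖·‖_F is the Frobenius norm; i.e. the truncated SVD is an optimal rank-r approximation of A in Frobenius norm. -/
open Matrix Finset

/-- The Frobenius norm of a real `d × d` matrix: `‖M‖_F = √(∑_{i,j} M_{ij}²)`. -/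
noncomputable def frobNorm {d : ℕ} (M : Matrix (Fin d) (Fin d) ℝ) : ℝ :=
  Real.sqrt (∑ i, ∑ j, (M i j) ^ 2)

open Matrix Finset

lemma sq_sum_eq_trace {d : ℕ} (M : Matrix (Fin d) (Fin d) ℝ) :
    ∑ i, ∑ j, (M i j) ^ 2 = Matrix.trace (Mᵀ * M) := by
  simp [Matrix.trace, Matrix.diag, Matrix.mul_apply, sq]
  exact Finset.sum_comm

lemma trace_sq_nonneg {d : ℕ} (M : Matrix (Fin d) (Fin d) ℝ) :
    0 ≤ Matrix.trace (Mᵀ * M) := by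
  rw [← sq_sum_eq_trace]
  exact Finset.sum_nonneg fun i _ => Finset.sum_nonneg fun j _ => sq_nonneg _

lemma trace_proj {d : ℕ} (M P : Matrix (Fin d) (Fin d) ℝ) (hPs : Pᵀ = P) (hPP : P * P = P) :
    Matrix.trace ((M * P)ᵀ * (M * P)) = Matrix.trace (Mᵀ * M * P) := by
  calc Matrix.trace ((M * P)ᵀ * (M * P))
      = Matrix.trace (P * (Mᵀ * (M * P))) := by
        rw [Matrix.transpose_mul, hPs, Matrix.mul_assoc]
    _ = Matrix.trace ((Mᵀ * (M * P)) * P) := Matrix.trace_mul_comm _ _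
    _ = Matrix.trace (Mᵀ * M * P) := by
        simp only [Matrix.mul_assoc, hPP]

lemma proj_le {d : ℕ} (M P : Matrix (Fin d) (Fin d) ℝ) (hPs : Pᵀ = P) (hPP : P * P = P) :
    Matrix.trace (Mᵀ * M * P) ≤ Matrix.trace (Mᵀ * M) := by
  have h1 : (1 - P : Matrix (Fin d) (Fin d) ℝ)ᵀ = 1 - P := by
    rw [Matrix.transpose_sub, Matrix.transpose_one, hPs]
  have h2 : ((1 : Matrix (Fin d) (Fin d) ℝ) - P) * (1 - P) = 1 - P := by
    rw [Matrix.sub_mul, Matrix.one_mul, Matrix.mul_sub, Matrix.mul_one, hPP]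
    abel
  have h3 := trace_proj M (1 - P) h1 h2
  have h4 := trace_sq_nonneg (M * (1 - P))
  rw [h3, Matrix.mul_sub, Matrix.mul_one, Matrix.trace_sub] at h4
  linarith

/-- Eckart–Young, Frobenius norm: For `A = U Σ Vᵀ` an SVD with
`σ₁ ≥ … ≥ σ_d ≥ 0` and `A_r = ∑_{i=1}^r σ_i u_i v_iᵀ` the rank-`r` truncation,
every real `d × d` matrix `B` of rank at most `r` satisfies
`‖A − A_r‖_F ≤ ‖A − B‖_F`. -/
theorem eckart_young_frobenius
    (d r : ℕ)
    (U V : Matrix (Fin d) (Fin d) ℝ)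
    (hU : Uᵀ * U = 1 ∧ U * Uᵀ = 1)
    (hV : Vᵀ * V = 1 ∧ V * Vᵀ = 1)
    (σ : Fin d → ℝ)
    (hσanti : ∀ i j : Fin d, i ≤ j → σ j ≤ σ i)
    (hσnonneg : ∀ i : Fin d, 0 ≤ σ i)
    (A : Matrix (Fin d) (Fin d) ℝ)
    (hA : A = U * Matrix.diagonal σ * Vᵀ)
    (Ar : Matrix (Fin d) (Fin d) ℝ)
    (hAr : Ar = ∑ i ∈ Finset.univ.filter (fun i : Fin d => (i : ℕ) < r),
      σ i • Matrix.vecMulVec (fun j => U j i) (fun j => V j i))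
    (B : Matrix (Fin d) (Fin d) ℝ)
    (hB : B.rank ≤ r) :
    frobNorm (A - Ar) ≤ frobNorm (A - B) := by
  unfold frobNorm
  apply Real.sqrt_le_sqrt
  -- goal : ∑ i, ∑ j, ((A - Ar) i j)^2 ≤ ∑ i, ∑ j, ((A - B) i j)^2
  rw [sq_sum_eq_trace, sq_sum_eq_trace]
  -- σ' : truncated-away singular values
  set σ' : Fin d → ℝ := fun i => if (i : ℕ) < r then 0 else σ i with hσ'
  have hAAr : A - Ar = U * Matrix.diagonal σ' * Vᵀ := by
    ext j l
    rw [hA, hAr]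
    simp only [Matrix.sub_apply, Matrix.sum_apply, Matrix.smul_apply,
      Matrix.vecMulVec_apply, smul_eq_mul, Matrix.mul_apply, Matrix.transpose_apply,
      Matrix.diagonal_apply, ite_mul, mul_ite, zero_mul, mul_zero,
      Finset.sum_ite_eq, Finset.sum_ite_eq', Finset.mem_univ, if_true]
    rw [Finset.sum_filter, ← Finset.sum_sub_distrib]
    refine Finset.sum_congr rfl fun x _ => ?_
    simp only [hσ']
    split_ifs <;> ring
  -- LHS value
  have hLHS : Matrix.trace ((A - Ar)ᵀ * (A - Ar)) = ∑ i, σ' i ^ 2 := by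
    rw [hAAr]
    have : (U * Matrix.diagonal σ' * Vᵀ)ᵀ * (U * Matrix.diagonal σ' * Vᵀ)
        = V * (Matrix.diagonal σ' * Matrix.diagonal σ') * Vᵀ := by
      simp only [Matrix.transpose_mul, Matrix.transpose_transpose,
        Matrix.diagonal_transpose, Matrix.mul_assoc]
      rw [show Uᵀ * (U * (Matrix.diagonal σ' * Vᵀ)) = (Uᵀ * U) * (Matrix.diagonal σ' * Vᵀ) by
        simp only [Matrix.mul_assoc], hU.1, Matrix.one_mul]
    rw [this, Matrix.diagonal_mul_diagonal]
    rw [Matrix.trace_mul_comm, ← Matrix.mul_assoc, hV.1, Matrix.one_mul,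
      Matrix.trace_diagonal]
    exact Finset.sum_congr rfl fun i _ => (sq (σ' i)).symm
  rw [hLHS]
  -- kernel of B and orthonormal basis
  let lin : EuclideanSpace ℝ (Fin d) →ₗ[ℝ] EuclideanSpace ℝ (Fin d) := Matrix.toEuclideanLin B
  let K := LinearMap.ker lin
  let k := Module.finrank ℝ K
  have hrk : B.rank + k = d := by
    have h0 : Module.finrank ℝ (LinearMap.range lin) = B.rank :=
      (B.rank_eq_finrank_range_toLin (PiLp.basisFun 2 ℝ (Fin d)) (PiLp.basisFun 2 ℝ (Fin d))).symm
    have := LinearMap.finrank_range_add_finrank_ker lin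
    simpa [h0] using this
  let b := stdOrthonormalBasis ℝ K
  let W : Matrix (Fin d) (Fin k) ℝ := fun j i => (b i : EuclideanSpace ℝ (Fin d)) j
  have hWW : Wᵀ * W = 1 := by
    ext i i'
    have h2 := (orthonormal_iff_ite.mp b.orthonormal) i i'
    rw [Submodule.coe_inner] at h2
    simp [PiLp.inner_apply] at h2
    rw [Matrix.mul_apply, Matrix.one_apply, ← h2]
    exact Finset.sum_congr rfl fun x _ => mul_comm _ _
  have hBW : B * W = 0 := by
    ext j i
    have hk : lin (b i : EuclideanSpace ℝ (Fin d)) = 0 := (b i).2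
    have h3 : B.mulVec (fun j => (b i : EuclideanSpace ℝ (Fin d)) j) = 0 := congrArg WithLp.ofLp hk
    have h4 := congrFun h3 j
    rw [Matrix.mul_apply]
    simpa [W, Matrix.mulVec, dotProduct] using h4
  -- the projection P and Q = Vᵀ P V
  set P : Matrix (Fin d) (Fin d) ℝ := W * Wᵀ with hP
  have hPs : Pᵀ = P := by rw [hP, Matrix.transpose_mul, Matrix.transpose_transpose]
  have hPP : P * P = P := by
    rw [hP, Matrix.mul_assoc, ← Matrix.mul_assoc Wᵀ, hWW, Matrix.one_mul]
  set G : Matrix (Fin d) (Fin k) ℝ := Vᵀ * W with hG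
  have hGt : Gᵀ = Wᵀ * V := by
    rw [hG, Matrix.transpose_mul, Matrix.transpose_transpose]
  have hGG : Gᵀ * G = 1 := by
    rw [hGt, hG, Matrix.mul_assoc, ← Matrix.mul_assoc V, hV.2, Matrix.one_mul, hWW]
  set Q : Matrix (Fin d) (Fin d) ℝ := G * Gᵀ with hQ
  have hQs : Qᵀ = Q := by rw [hQ, Matrix.transpose_mul, Matrix.transpose_transpose]
  have hQQ : Q * Q = Q := by
    rw [hQ, Matrix.mul_assoc, ← Matrix.mul_assoc Gᵀ, hGG, Matrix.one_mul]
  have htrQ : Matrix.trace Q = (k : ℝ) := by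
    rw [hQ, Matrix.trace_mul_comm, hGG]
    simp [Matrix.trace_one]
  -- diag entries of Q in [0,1]
  have ht0 : ∀ j, 0 ≤ Q j j := by
    intro j
    have : Q j j = ∑ x, (Q j x) ^ 2 := by
      conv_lhs => rw [← hQQ]
      rw [Matrix.mul_apply]
      refine Finset.sum_congr rfl fun x _ => ?_
      have : Q x j = Q j x := by
        conv_lhs => rw [← hQs]
        rfl
      rw [this]; ring
    rw [this]
    exact Finset.sum_nonneg fun x _ => sq_nonneg _
  have ht1 : ∀ j, Q j j ≤ 1 := by
    intro j
    have he : Q j j = ∑ x, (Q j x) ^ 2 := by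
      conv_lhs => rw [← hQQ]
      rw [Matrix.mul_apply]
      refine Finset.sum_congr rfl fun x _ => ?_
      have : Q x j = Q j x := by
        conv_lhs => rw [← hQs]
        rfl
      rw [this]; ring
    have hsingle : (Q j j) ^ 2 ≤ ∑ x, (Q j x) ^ 2 :=
      Finset.single_le_sum (fun x _ => sq_nonneg (Q j x)) (Finset.mem_univ j)
    nlinarith [ht0 j]
  -- trace bound for A - B
  have hMP : (A - B) * P = A * P := by
    rw [Matrix.sub_mul, hP, ← Matrix.mul_assoc B W Wᵀ, hBW, Matrix.zero_mul, sub_zero]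
  have hAtA : Aᵀ * A = V * Matrix.diagonal (fun i => σ i ^ 2) * Vᵀ := by
    rw [hA]
    simp only [Matrix.transpose_mul, Matrix.transpose_transpose,
      Matrix.diagonal_transpose, Matrix.mul_assoc]
    rw [show Uᵀ * (U * (Matrix.diagonal σ * Vᵀ)) = (Uᵀ * U) * (Matrix.diagonal σ * Vᵀ) by
      simp only [Matrix.mul_assoc], hU.1, Matrix.one_mul,
      show Matrix.diagonal σ * (Matrix.diagonal σ * Vᵀ)
          = (Matrix.diagonal σ * Matrix.diagonal σ) * Vᵀ from (Matrix.mul_assoc _ _ _).symm,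
      Matrix.diagonal_mul_diagonal, ← Matrix.mul_assoc,
      show (fun i => σ i * σ i) = fun i => σ i ^ 2 from funext fun i => (sq (σ i)).symm,
      Matrix.mul_assoc]
  have hstep1 : Matrix.trace ((A - B)ᵀ * (A - B) * P) ≤ Matrix.trace ((A - B)ᵀ * (A - B)) :=
    proj_le _ _ hPs hPP
  have hstep2 : Matrix.trace ((A - B)ᵀ * (A - B) * P) = ∑ j, σ j ^ 2 * Q j j := by
    have e1 : Matrix.trace (((A - B) * P)ᵀ * ((A - B) * P)) =
        Matrix.trace ((A - B)ᵀ * (A - B) * P) := trace_proj _ _ hPs hPP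
    have e2 : Matrix.trace ((A * P)ᵀ * (A * P)) = Matrix.trace (Aᵀ * A * P) :=
      trace_proj _ _ hPs hPP
    rw [← e1, hMP, e2, hAtA]
    have e3 : V * Matrix.diagonal (fun i => σ i ^ 2) * Vᵀ * P =
        V * (Matrix.diagonal (fun i => σ i ^ 2) * (Vᵀ * P)) := by
      simp only [Matrix.mul_assoc]
    rw [e3, Matrix.trace_mul_comm, Matrix.mul_assoc, Matrix.mul_assoc]
    have e4 : Vᵀ * (P * V) = Q := by
      rw [hQ, hGt, hG, hP]
      simp only [Matrix.mul_assoc]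
    rw [e4]
    simp [Matrix.trace, Matrix.diag, Matrix.diagonal_mul]
  refine le_trans ?_ (hstep2 ▸ hstep1)
  by_cases hrd : d ≤ r
  · have hz : ∑ i, σ' i ^ 2 = 0 := Finset.sum_eq_zero fun i _ => by
      simp [hσ', if_pos (lt_of_lt_of_le i.isLt hrd)]
    rw [hz]
    exact Finset.sum_nonneg fun j _ => mul_nonneg (sq_nonneg _) (ht0 j)
  · push_neg at hrd
    set c : ℝ := σ ⟨r, hrd⟩ ^ 2 with hc
    set S1 := Finset.univ.filter (fun j : Fin d => (j : ℕ) < r) with hS1def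
    set S2 := Finset.univ.filter (fun j : Fin d => ¬ (j : ℕ) < r) with hS2def
    have hsplitσ : ∑ i, σ' i ^ 2 = ∑ j ∈ S2, σ j ^ 2 := by
      rw [hS2def, Finset.sum_filter]
      refine Finset.sum_congr rfl fun i _ => ?_
      simp only [hσ']
      split_ifs <;> simp
    have hsplitT : ∑ j ∈ S1, (σ j ^ 2 * Q j j) + ∑ j ∈ S2, (σ j ^ 2 * Q j j)
        = ∑ j, σ j ^ 2 * Q j j := Finset.sum_filter_add_sum_filter_not _ _ _
    have htrQ' : Matrix.trace Q = ∑ j, Q j j := rfl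
    have hsplitt : ∑ j ∈ S1, Q j j + ∑ j ∈ S2, Q j j = (k : ℝ) := by
      rw [Finset.sum_filter_add_sum_filter_not, ← htrQ', htrQ]
    have hS1card : S1.card = r := by
      have : S1 = (Finset.univ : Finset (Fin r)).map (Fin.castLEEmb hrd.le) := by
        ext j
        simp only [hS1def, Finset.mem_filter, Finset.mem_univ, true_and, Finset.mem_map,
          Fin.castLEEmb_apply]
        constructor
        · intro hj; exact ⟨⟨(j : ℕ), hj⟩, rfl⟩
        · rintro ⟨a, rfl⟩; exact a.isLt
      rw [this, Finset.card_map, Finset.card_univ, Fintype.card_fin]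
    have hcards : S1.card + S2.card = d := by
      rw [hS1def, hS2def, Finset.card_filter_add_card_filter_not,
        Finset.card_univ, Fintype.card_fin]
    have hcard2 : (S2.card : ℝ) ≤ (k : ℝ) := by
      have : S2.card ≤ k := by omega
      exact_mod_cast this
    have hσS1 : ∀ j ∈ S1, c ≤ σ j ^ 2 := by
      intro j hj
      rw [hS1def, Finset.mem_filter] at hj
      have hle : (⟨r, hrd⟩ : Fin d) ≥ j := by
        rw [ge_iff_le, Fin.le_def]
        exact le_of_lt hj.2
      exact pow_le_pow_left₀ (hσnonneg _) (hσanti j ⟨r, hrd⟩ hle) 2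
    have hσS2 : ∀ j ∈ S2, σ j ^ 2 ≤ c := by
      intro j hj
      rw [hS2def, Finset.mem_filter] at hj
      have hle : (⟨r, hrd⟩ : Fin d) ≤ j := by
        rw [Fin.le_def]
        exact le_of_not_gt hj.2
      exact pow_le_pow_left₀ (hσnonneg _) (hσanti _ j hle) 2
    have hc0 : (0 : ℝ) ≤ c := sq_nonneg _
    have h1 : c * ∑ j ∈ S1, Q j j ≤ ∑ j ∈ S1, σ j ^ 2 * Q j j := by
      rw [Finset.mul_sum]
      exact Finset.sum_le_sum fun j hj =>
        mul_le_mul_of_nonneg_right (hσS1 j hj) (ht0 j)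
    have h2 : ∑ j ∈ S2, (1 - Q j j) ≤ ∑ j ∈ S1, Q j j := by
      rw [Finset.sum_sub_distrib, Finset.sum_const, nsmul_eq_mul, mul_one]
      linarith [hsplitt, hcard2]
    have h2' : c * ∑ j ∈ S2, (1 - Q j j) ≤ c * ∑ j ∈ S1, Q j j :=
      mul_le_mul_of_nonneg_left h2 hc0
    have h3 : ∑ j ∈ S2, σ j ^ 2 * (1 - Q j j) ≤ c * ∑ j ∈ S2, (1 - Q j j) := by
      rw [Finset.mul_sum]
      exact Finset.sum_le_sum fun j hj =>
        mul_le_mul_of_nonneg_right (hσS2 j hj) (by linarith [ht1 j])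
    have hdec : ∑ j ∈ S2, σ j ^ 2
        = ∑ j ∈ S2, σ j ^ 2 * Q j j + ∑ j ∈ S2, σ j ^ 2 * (1 - Q j j) := by
      rw [← Finset.sum_add_distrib]
      exact Finset.sum_congr rfl fun j _ => by ring
    rw [hsplitσ]
    linarith [h1, h2', h3, hsplitT, hdec]
end
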